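/- arXiv:1503.02736 — 2 statements merged into one kernel-verified Lean document; each statement's English description precedes it below -/
import Mathlib

section
/- Let ρ, c, k, ℓ, γ, D∞, h₀ be positive real parameters, let α = k/(ρc), and let 0 < ε < 1. Define F(x) = exp(-x²) / (k/(h₀√(πα)) + erf(x)) and G(x) = x + (γ(1-ε)√π/(2D∞)) · (1/F(x)) for x > 0. Then the equation (D∞c/(ℓ√π)) F(x) = G(x) has a (unique) solution x = ξ > 0 if and only if h₀ > (1/D∞)√(γ(1-ε)ρℓk/2); moreover, when this inequality holds the positive solution ξ is unique. -/
open Real Set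

/-!
Write the equation as `H(x) = C F(x) - x - B / F(x) = 0`, where `B = γ(1-ε)√π / (2D∞) ≥ 0` and
`C = D∞c / (ℓ√π) > 0`. Since `erf` increases and `exp(-x²)` decreases on `[0, ∞)`, `F` is positive
and strictly decreasing there, hence `H` is strictly decreasing; it is continuous and
`H(C F(0)) ≤ C F(0) - C F(0) = 0`. By the intermediate value theorem `H` has a positive root iff
`H(0) > 0`, i.e. `B < C F(0)²`, and the root is unique by monotonicity. With
`F(0) = h₀ √(πα) / k` the inequality `B < C F(0)²` reduces to `(D∞ h₀)² > γ(1-ε)ρℓk/2`.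
-/

/-- The error function `erf x = (2/√π) ∫₀ˣ exp(-t²) dt`. -/
noncomputable def erf (x : ℝ) : ℝ := (2 / Real.sqrt π) * ∫ t in (0:ℝ)..x, Real.exp (-t ^ 2)

lemma erf_zero : erf 0 = 0 := by simp [erf]

lemma continuous_exp_neg_sq : Continuous fun t : ℝ => exp (-t ^ 2) := by fun_prop

lemma erf_continuous : Continuous erf :=
  continuous_const.mul <| intervalIntegral.continuous_primitive
    (fun a b => continuous_exp_neg_sq.intervalIntegrable a b) 0

lemma erf_strictMono : StrictMono erf := by
  intro x y hxy
  have hint (a b : ℝ) : IntervalIntegrable (fun t => exp (-t ^ 2)) MeasureTheory.volume a b :=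
    continuous_exp_neg_sq.intervalIntegrable a b
  have hpos : 0 < ∫ t in x..y, exp (-t ^ 2) :=
    intervalIntegral.intervalIntegral_pos_of_pos (hint x y) (fun t => exp_pos _) hxy
  unfold erf
  rw [← intervalIntegral.integral_add_adjacent_intervals (hint 0 x) (hint x y)]
  exact mul_lt_mul_of_pos_left (by linarith) (by positivity)

lemma erf_nonneg {x : ℝ} (hx : 0 ≤ x) : 0 ≤ erf x :=
  erf_zero ▸ erf_strictMono.monotone hx

section ExpDivErf

variable {A : ℝ}

lemma add_erf_pos (hA : 0 < A) {x : ℝ} (hx : x ∈ Ici 0) : 0 < A + erf x :=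
  add_pos_of_pos_of_nonneg hA (erf_nonneg hx)

lemma exp_neg_sq_div_add_erf_pos (hA : 0 < A) {x : ℝ} (hx : x ∈ Ici 0) :
    0 < exp (-x ^ 2) / (A + erf x) :=
  div_pos (exp_pos _) (add_erf_pos hA hx)

lemma strictAntiOn_exp_neg_sq_div_add_erf (hA : 0 < A) :
    StrictAntiOn (fun x => exp (-x ^ 2) / (A + erf x)) (Ici 0) := by
  intro x hx y hy hxy
  have hexp : exp (-y ^ 2) < exp (-x ^ 2) := exp_lt_exp.2 (by nlinarith [mem_Ici.1 hx])
  have herf : A + erf x < A + erf y := by linarith [erf_strictMono hxy]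
  exact div_lt_div₀ hexp herf.le (exp_pos _).le (add_erf_pos hA hx)

lemma continuousOn_exp_neg_sq_div_add_erf (hA : 0 < A) :
    ContinuousOn (fun x => exp (-x ^ 2) / (A + erf x)) (Ici 0) :=
  continuous_exp_neg_sq.continuousOn.div (continuous_const.add erf_continuous).continuousOn
    fun _ hx => (add_erf_pos hA hx).ne'

end ExpDivErf

lemma StrictAntiOn.exists_pos_eq_zero_iff {H : ℝ → ℝ} (hanti : StrictAntiOn H (Ici 0))
    (hcont : ContinuousOn H (Ici 0)) {M : ℝ} (hM : 0 ≤ M) (hHM : H M ≤ 0) :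
    (∃ ξ > 0, H ξ = 0) ↔ 0 < H 0 := by
  constructor
  · rintro ⟨ξ, hξ, hzero⟩
    exact hzero ▸ hanti self_mem_Ici (mem_Ici.2 hξ.le) hξ
  · intro h0
    obtain ⟨ξ, ⟨hξ, -⟩, hzero⟩ :=
      intermediate_value_Ioc' hM (hcont.mono Icc_subset_Ici_self) ⟨hHM, h0⟩
    exact ⟨ξ, hξ, hzero⟩

section PositiveAntitone

variable {F : ℝ → ℝ} {B C : ℝ}

lemma strictAntiOn_mul_sub_add_mul_one_div (hB : 0 ≤ B) (hC : 0 ≤ C)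
    (hpos : ∀ x ∈ Ici 0, 0 < F x) (hanti : StrictAntiOn F (Ici 0)) :
    StrictAntiOn (fun x => C * F x - (x + B * (1 / F x))) (Ici 0) := by
  intro x hx y hy hxy
  have hFxy : F y ≤ F x := (hanti hx hy hxy).le
  have hCF : C * F y ≤ C * F x := mul_le_mul_of_nonneg_left hFxy hC
  have hBF : B * (1 / F x) ≤ B * (1 / F y) :=
    mul_le_mul_of_nonneg_left (one_div_le_one_div_of_le (hpos y hy) hFxy) hB
  dsimp only
  linarith

lemma continuousOn_mul_sub_add_mul_one_div (hpos : ∀ x ∈ Ici 0, 0 < F x)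
    (hcont : ContinuousOn F (Ici 0)) :
    ContinuousOn (fun x => C * F x - (x + B * (1 / F x))) (Ici 0) :=
  (continuousOn_const.mul hcont).sub <| continuousOn_id.add <|
    continuousOn_const.mul <| continuousOn_const.div hcont fun x hx => (hpos x hx).ne'

theorem exists_unique_pos_mul_eq_add_mul_one_div_iff (hB : 0 ≤ B) (hC : 0 ≤ C)
    (hpos : ∀ x ∈ Ici 0, 0 < F x) (hanti : StrictAntiOn F (Ici 0))
    (hcont : ContinuousOn F (Ici 0)) :
    ((∃ ξ > 0, C * F ξ = ξ + B * (1 / F ξ)) ↔ B < C * F 0 ^ 2) ∧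
      (B < C * F 0 ^ 2 → ∃! ξ, ξ > 0 ∧ C * F ξ = ξ + B * (1 / F ξ)) := by
  set H : ℝ → ℝ := fun x => C * F x - (x + B * (1 / F x)) with hH
  have hHanti : StrictAntiOn H (Ici 0) := strictAntiOn_mul_sub_add_mul_one_div hB hC hpos hanti
  have hF0 : 0 < F 0 := hpos 0 self_mem_Ici
  have hM : 0 ≤ C * F 0 := mul_nonneg hC hF0.le
  have hHM : H (C * F 0) ≤ 0 := by
    have hFM : F (C * F 0) ≤ F 0 := hanti.antitoneOn self_mem_Ici (mem_Ici.2 hM) hM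
    have : 0 ≤ B * (1 / F (C * F 0)) := mul_nonneg hB (one_div_nonneg.2 (hpos _ (mem_Ici.2 hM)).le)
    simp only [hH]
    nlinarith
  have hroot : ∀ ξ, C * F ξ = ξ + B * (1 / F ξ) ↔ H ξ = 0 := fun ξ => sub_eq_zero.symm
  have hstart : 0 < H 0 ↔ B < C * F 0 ^ 2 := by
    simp only [hH, zero_add, sub_pos, mul_one_div, div_lt_iff₀ hF0]
    ring_nf
  have hexists : (∃ ξ > 0, C * F ξ = ξ + B * (1 / F ξ)) ↔ B < C * F 0 ^ 2 := by
    simp only [hroot]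
    exact (hHanti.exists_pos_eq_zero_iff
      (continuousOn_mul_sub_add_mul_one_div hpos hcont) hM hHM).trans hstart
  refine ⟨hexists, fun h => ?_⟩
  obtain ⟨ξ, hξ, hξroot⟩ := hexists.2 h
  refine ⟨ξ, ⟨hξ, hξroot⟩, fun η ⟨hη, hηroot⟩ => ?_⟩
  exact hHanti.injOn (mem_Ici.2 hη.le) (mem_Ici.2 hξ.le)
    (((hroot η).1 hηroot).trans ((hroot ξ).1 hξroot).symm)

end PositiveAntitone

lemma convective_threshold_iff {ρ c k ℓ γ Dinf h₀ ε : ℝ} (hρ : 0 < ρ) (hc : 0 < c) (hk : 0 < k)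
    (hℓ : 0 < ℓ) (hD : 0 < Dinf) (hh : 0 < h₀) :
    γ * (1 - ε) * √π / (2 * Dinf) <
        Dinf * c / (ℓ * √π) * (h₀ * √(π * (k / (ρ * c))) / k) ^ 2 ↔
      h₀ > (1 / Dinf) * √(γ * (1 - ε) * ρ * ℓ * k / 2) := by
  have hπ : 0 < √π := sqrt_pos.2 pi_pos
  have hsq : (h₀ * √(π * (k / (ρ * c))) / k) ^ 2 = h₀ ^ 2 * √π ^ 2 / (k * ρ * c) := by
    rw [div_pow, mul_pow, sq_sqrt (by positivity), sq_sqrt pi_pos.le]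
    field_simp
  have hlhs : Dinf * c / (ℓ * √π) * (h₀ * √(π * (k / (ρ * c))) / k) ^ 2 -
        γ * (1 - ε) * √π / (2 * Dinf) =
      √π / (Dinf * ℓ * k * ρ) * ((Dinf * h₀) ^ 2 - γ * (1 - ε) * ρ * ℓ * k / 2) := by
    rw [hsq]; field_simp
  rw [gt_iff_lt, one_div, inv_mul_lt_iff₀ hD, sqrt_lt' (by positivity), ← sub_pos, hlhs,
    mul_pos_iff_of_pos_left (by positivity), sub_pos]

theorem stmt_2_general (ρ c k ℓ γ Dinf h₀ ε α : ℝ)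
    (hρ : 0 < ρ) (hc : 0 < c) (hk : 0 < k) (hℓ : 0 < ℓ) (hγ : 0 < γ)
    (hD : 0 < Dinf) (hh : 0 < h₀) (hα : α = k / (ρ * c)) (hε1 : ε < 1)
    (F G : ℝ → ℝ)
    (hF : ∀ x, F x = Real.exp (-x ^ 2) / (k / (h₀ * Real.sqrt (π * α)) + erf x))
    (hG : ∀ x, G x = x + (γ * (1 - ε) * Real.sqrt π / (2 * Dinf)) * (1 / F x)) :
    ((∃ ξ > (0:ℝ), (Dinf * c / (ℓ * Real.sqrt π)) * F ξ = G ξ) ↔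
      h₀ > (1 / Dinf) * Real.sqrt (γ * (1 - ε) * ρ * ℓ * k / 2)) ∧
    (h₀ > (1 / Dinf) * Real.sqrt (γ * (1 - ε) * ρ * ℓ * k / 2) →
      ∃! ξ : ℝ, ξ > 0 ∧ (Dinf * c / (ℓ * Real.sqrt π)) * F ξ = G ξ) := by
  subst hα
  have hA : 0 < k / (h₀ * √(π * (k / (ρ * c)))) := by positivity
  have hF' : F = fun x => exp (-x ^ 2) / (k / (h₀ * √(π * (k / (ρ * c)))) + erf x) := funext hF
  have hF0 : F 0 = h₀ * √(π * (k / (ρ * c))) / k := by simp [hF, erf_zero]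
  have h1ε : 0 < 1 - ε := sub_pos.2 hε1
  simp only [hG]
  rw [← convective_threshold_iff hρ hc hk hℓ hD hh, ← hF0]
  exact exists_unique_pos_mul_eq_add_mul_one_div_iff (by positivity) (by positivity)
    (hF' ▸ fun x hx => exp_neg_sq_div_add_erf_pos hA hx)
    (hF' ▸ strictAntiOn_exp_neg_sq_div_add_erf hA) (hF' ▸ continuousOn_exp_neg_sq_div_add_erf hA)

/-- The equation `(D∞ c/(ℓ√π)) F(x) = G(x)` determining the solid–mushy interface
coefficient `ξ` for the convective boundary condition has a positive solution iff
`h₀ > (1/D∞)√(γ(1-ε)ρℓk/2)`, and in that case the positive solution is unique. -/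
theorem stmt_2 (ρ c k ℓ γ Dinf h₀ ε α : ℝ)
    (hρ : 0 < ρ) (hc : 0 < c) (hk : 0 < k) (hℓ : 0 < ℓ) (hγ : 0 < γ)
    (hD : 0 < Dinf) (hh : 0 < h₀) (hα : α = k / (ρ * c)) (hε0 : 0 < ε) (hε1 : ε < 1)
    (F G : ℝ → ℝ)
    (hF : ∀ x, F x = Real.exp (-x ^ 2) / (k / (h₀ * Real.sqrt (π * α)) + erf x))
    (hG : ∀ x, G x = x + (γ * (1 - ε) * Real.sqrt π / (2 * Dinf)) * (1 / F x)) :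
    ((∃ ξ > (0:ℝ), (Dinf * c / (ℓ * Real.sqrt π)) * F ξ = G ξ) ↔
      h₀ > (1 / Dinf) * Real.sqrt (γ * (1 - ε) * ρ * ℓ * k / 2)) ∧
    (h₀ > (1 / Dinf) * Real.sqrt (γ * (1 - ε) * ρ * ℓ * k / 2) →
      ∃! ξ : ℝ, ξ > 0 ∧ (Dinf * c / (ℓ * Real.sqrt π)) * F ξ = G ξ) :=
  stmt_2_general ρ c k ℓ γ Dinf h₀ ε α hρ hc hk hℓ hγ hD hh hα hε1 F G hF hG
end

section
/- Let ρ, c, k, ℓ, γ, D∞, h₀ be positive reals, α = k/(ρc), 0 < ε < 1, and ξ > 0. Define T(x,t) = -(h₀D∞√(πα)/k) · erf(ξ)/(1 + (h₀√(πα)/k)·erf(ξ)) · [1 - erf(x/(2√(αt)))/erf(ξ)], s(t) = 2ξ√(αt), μ = ξ + (γk/(2D∞h₀√α)) · exp(ξ²) · [1 + (h₀√(πα)/k)·erf(ξ)], r(t) = 2μ√(αt), F(x) = exp(-x²) / (k/(h₀√(πα)) + erf(x)) and G(x) = x + (γ(1-ε)√π/(2D∞)) · (1/F(x)). Then the Stefan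 condition k T_x(s(t), t) = ρℓ[ε s'(t) + (1-ε) r'(t)] holds for all t > 0 if and only if ξ satisfies (D∞c/(ℓ√π)) F(ξ) = G(ξ). -/
/-!
The solution is self-similar in `x / √(α t)`: the heat flux `k T_x(s(t), t)` and the front
speeds `s'(t)`, `r'(t)` all scale like `1 / √(α t)`, so at every time `t > 0` the Stefan
condition is the same `t`-independent identity once that factor is cleared. The choice of `μ`
is exactly what makes `G ξ = ε ξ + (1 - ε) μ`.
-/

open Real Filter Set Topology

lemma hasDerivAt_erf (x : ℝ) : HasDerivAt erf (2 / √π * exp (-x ^ 2)) x :=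
  ((continuous_exp.comp (continuous_pow 2).neg).integral_hasStrictDerivAt 0 x).hasDerivAt.const_mul
    _

lemma erf_pos {x : ℝ} (hx : 0 < x) : 0 < erf x := by
  have hint : 0 < ∫ t in (0:ℝ)..x, exp (-t ^ 2) :=
    intervalIntegral.intervalIntegral_pos_of_pos
      ((continuous_exp.comp (continuous_pow 2).neg).intervalIntegrable 0 x) (fun _ => exp_pos _) hx
  unfold erf
  positivity

lemma hasDerivAt_two_mul_mul_sqrt_mul (l : ℝ) {α t : ℝ} (h : 0 < α * t) :
    HasDerivAt (fun u => 2 * l * √(α * u)) (l * α / √(α * t)) t := by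
  have hsqrt := ((hasDerivAt_id' t).const_mul α).sqrt h.ne'
  refine (hsqrt.const_mul (2 * l)).congr_deriv ?_
  field_simp

lemma hasDerivAt_const_mul_one_sub_erf_div (A E : ℝ) {a : ℝ} (ha : a ≠ 0) (x : ℝ) :
    HasDerivAt (fun y => A * (1 - erf (y / a) / E))
      (-(A / E) * (2 / √π * exp (-(x / a) ^ 2) / a)) x := by
  have h := ((hasDerivAt_erf (x / a)).comp x ((hasDerivAt_id' x).div_const a)).div_const E
  refine ((h.const_sub 1).const_mul A).congr_deriv ?_
  field_simp

lemma stefan_balance_iff {ρ c k ℓ α Dinf φ m q : ℝ} (hρ : ρ ≠ 0) (hc : c ≠ 0) (hk : k ≠ 0)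
    (hℓ : ℓ ≠ 0) (hα : α = k / (ρ * c)) (hq : q ≠ 0) :
    Dinf * k * φ / (√π * q) = ρ * ℓ * α * m / q ↔ Dinf * c / (ℓ * √π) * φ = m := by
  subst hα
  field_simp

theorem stmt_5_general (ρ c k ℓ γ Dinf h₀ ε α ξ μ : ℝ)
    (hρ : 0 < ρ) (hc : 0 < c) (hk : 0 < k) (hℓ : 0 < ℓ)
    (hh : 0 < h₀) (hα : α = k / (ρ * c))
    (hξ : 0 < ξ)
    (T : ℝ → ℝ → ℝ) (s r : ℝ → ℝ) (F G : ℝ → ℝ)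
    (hT : ∀ x t, T x t =
      -(h₀ * Dinf * Real.sqrt (π * α) / k) *
        (erf ξ / (1 + (h₀ * Real.sqrt (π * α) / k) * erf ξ)) *
        (1 - erf (x / (2 * Real.sqrt (α * t))) / erf ξ))
    (hs : ∀ t, s t = 2 * ξ * Real.sqrt (α * t))
    (hμ : μ = ξ + (γ * k / (2 * Dinf * h₀ * Real.sqrt α)) * Real.exp (ξ ^ 2) *
      (1 + (h₀ * Real.sqrt (π * α) / k) * erf ξ))
    (hr : ∀ t, r t = 2 * μ * Real.sqrt (α * t))
    (hF : ∀ x, F x = Real.exp (-x ^ 2) / (k / (h₀ * Real.sqrt (π * α)) + erf x))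
    (hG : ∀ x, G x = x + (γ * (1 - ε) * Real.sqrt π / (2 * Dinf)) * (1 / F x)) :
    (∀ t > (0:ℝ), k * deriv (fun y => T y t) (s t) =
        ρ * ℓ * (ε * deriv s t + (1 - ε) * deriv r t)) ↔
      (Dinf * c / (ℓ * Real.sqrt π)) * F ξ = G ξ := by
  have hα0 : 0 < α := hα ▸ by positivity
  have hπα : √(π * α) = √π * √α := sqrt_mul pi_pos.le α
  have hπ : 0 < √π := sqrt_pos.2 pi_pos
  have hsα : 0 < √α := sqrt_pos.2 hα0
  have herf : 0 < erf ξ := erf_pos hξ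
  have hG' : G ξ = ε * ξ + (1 - ε) * μ := by
    rw [hG, hF, hμ, one_div_div, exp_neg, div_inv_eq_mul, hπα]
    field_simp
    ring
  have hbalance : ∀ t > 0, (k * deriv (fun y => T y t) (s t) =
      ρ * ℓ * (ε * deriv s t + (1 - ε) * deriv r t)) ↔
      Dinf * k * F ξ / (√π * √(α * t)) = ρ * ℓ * α * G ξ / √(α * t) := by
    intro t ht
    have hq : 0 < √(α * t) := sqrt_pos.2 (mul_pos hα0 ht)
    have hT' : (fun y => T y t) = _ := funext fun y => hT y t
    rw [funext hs, funext hr, (hasDerivAt_two_mul_mul_sqrt_mul ξ (mul_pos hα0 ht)).deriv,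
      (hasDerivAt_two_mul_mul_sqrt_mul μ (mul_pos hα0 ht)).deriv, hT',
      (hasDerivAt_const_mul_one_sub_erf_div _ _ (by positivity) _).deriv, hG', hF, hπα]
    field_simp
  have hstefan : ∀ t > 0, (k * deriv (fun y => T y t) (s t) =
      ρ * ℓ * (ε * deriv s t + (1 - ε) * deriv r t)) ↔ Dinf * c / (ℓ * √π) * F ξ = G ξ :=
    fun t ht => (hbalance t ht).trans
      (stefan_balance_iff hρ.ne' hc.ne' hk.ne' hℓ.ne' hα (sqrt_pos.2 (mul_pos hα0 ht)).ne')
  exact ⟨fun h => (hstefan 1 one_pos).1 (h 1 one_pos), fun h t ht => (hstefan t ht).2 h⟩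

/-- For the explicit solution with convective boundary condition, the Stefan condition
`k T_x(s(t),t) = ρℓ[ε s'(t) + (1-ε) r'(t)]` holds for all `t > 0` iff the coefficient
`ξ` satisfies the transcendental equation `(D∞ c/(ℓ√π)) F(ξ) = G(ξ)`. -/
theorem stmt_5 (ρ c k ℓ γ Dinf h₀ ε α ξ μ : ℝ)
    (hρ : 0 < ρ) (hc : 0 < c) (hk : 0 < k) (hℓ : 0 < ℓ) (hγ : 0 < γ)
    (hD : 0 < Dinf) (hh : 0 < h₀) (hα : α = k / (ρ * c)) (hε0 : 0 < ε) (hε1 : ε < 1)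
    (hξ : 0 < ξ)
    (T : ℝ → ℝ → ℝ) (s r : ℝ → ℝ) (F G : ℝ → ℝ)
    (hT : ∀ x t, T x t =
      -(h₀ * Dinf * Real.sqrt (π * α) / k) *
        (erf ξ / (1 + (h₀ * Real.sqrt (π * α) / k) * erf ξ)) *
        (1 - erf (x / (2 * Real.sqrt (α * t))) / erf ξ))
    (hs : ∀ t, s t = 2 * ξ * Real.sqrt (α * t))
    (hμ : μ = ξ + (γ * k / (2 * Dinf * h₀ * Real.sqrt α)) * Real.exp (ξ ^ 2) *
      (1 + (h₀ * Real.sqrt (π * α) / k) * erf ξ))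
    (hr : ∀ t, r t = 2 * μ * Real.sqrt (α * t))
    (hF : ∀ x, F x = Real.exp (-x ^ 2) / (k / (h₀ * Real.sqrt (π * α)) + erf x))
    (hG : ∀ x, G x = x + (γ * (1 - ε) * Real.sqrt π / (2 * Dinf)) * (1 / F x)) :
    (∀ t > (0:ℝ), k * deriv (fun y => T y t) (s t) =
        ρ * ℓ * (ε * deriv s t + (1 - ε) * deriv r t)) ↔
      (Dinf * c / (ℓ * Real.sqrt π)) * F ξ = G ξ :=
  stmt_5_general ρ c k ℓ γ Dinf h₀ ε α ξ μ hρ hc hk hℓ hh hα hξ T s r F G hT hs hμ hr hF hG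
end
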